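/- Let ρ ⊆ σ be finite signatures, let M1 and M2 be descriptive σ-models based on weakly transitive frames, and let x1 be a point of M1 and x2 a point of M2. Then t^ρ(x1) = t^ρ(x2) if and only if M1,x1 ∼ρ M2,x2, i.e., if and only if there is a ρ-bisimulation between M1 and M2 relating x1 to x2. -/

import Mathlib

/-- Modal formulas built from propositional variables (indexed by ℕ),
constants ⊤, ⊥, negation, conjunction and the modal operator ◇. -/
inductive MF : Type where
  | var : ℕ → MF
  | top : MF
  | bot : MF
  | neg : MF → MF
  | and : MF → MF → MF
  | dia : MF → MF
deriving DecidableEq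

namespace MF

/-- Disjunction, as an abbreviation. -/
def or (a b : MF) : MF := neg (and (neg a) (neg b))

/-- Implication, as an abbreviation. -/
def imp (a b : MF) : MF := MF.or (neg a) b

/-- Box, as an abbreviation: □φ := ¬◇¬φ. -/
def box (a : MF) : MF := neg (dia (neg a))

/-- The (finite) set of propositional variables occurring in a formula. -/
def sig : MF → Finset ℕ
  | var n => {n}
  | top => ∅
  | bot => ∅
  | neg a => a.sig
  | and a b => a.sig ∪ b.sig
  | dia a => a.sig

/-- The set of subformulas of a formula. -/
def subf : MF → Finset MF
  | var n => {var n}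
  | top => {top}
  | bot => {bot}
  | neg a => insert (neg a) (subf a)
  | and a b => insert (and a b) (subf a ∪ subf b)
  | dia a => insert (dia a) (subf a)

/-- The number of subformulas of a formula. -/
def nsub (a : MF) : ℕ := (subf a).card

end MF

/-- A Kripke model: a binary (accessibility) relation on worlds together with
a valuation assigning to each propositional variable a set of worlds. -/
structure KModel (W : Type) where
  R : W → W → Prop
  val : ℕ → W → Prop

/-- Weak transitivity: xRy and yRz imply x = z or xRz. -/
def WTrans {W : Type} (R : W → W → Prop) : Prop :=
  ∀ x y z : W, R x y → R y z → x = z ∨ R x z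

/-- The usual Kripke truth relation. -/
def Sat {W : Type} (M : KModel W) : W → MF → Prop
  | x, .var n => M.val n x
  | _, .top => True
  | _, .bot => False
  | x, .neg a => ¬ Sat M x a
  | x, .and a b => Sat M x a ∧ Sat M x b
  | x, .dia a => ∃ y, M.R x y ∧ Sat M y a

/-- wK4-validity: truth at every point of every model based on a weakly
transitive frame. -/
def WK4Valid (φ : MF) : Prop :=
  ∀ (W : Type) (M : KModel W), WTrans M.R → ∀ x : W, Sat M x φ

/-- The cluster of a point x: C(x) = {x} ∪ {y | xRy and yRx}. -/
def cluster {W : Type} (R : W → W → Prop) (x : W) : Set W :=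
  {x} ∪ {y | R x y ∧ R y x}

/-- C R C' for sets of points: xRy for some x ∈ C, y ∈ C'. -/
def clusterRel {W : Type} (R : W → W → Prop) (C C' : Set W) : Prop :=
  ∃ x ∈ C, ∃ y ∈ C', R x y

/-- C R y for a set C and point y: xRy for some x ∈ C. -/
def clusterRelPt {W : Type} (R : W → W → Prop) (C : Set W) (y : W) : Prop :=
  ∃ x ∈ C, R x y

/-- C R^s C': C R C' and C ≠ C'. -/
def clusterRelS {W : Type} (R : W → W → Prop) (C C' : Set W) : Prop :=
  clusterRel R C C' ∧ C ≠ C'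

/-- A set is a cluster if it is the cluster of some point. -/
def IsCluster {W : Type} (R : W → W → Prop) (C : Set W) : Prop :=
  ∃ x : W, C = cluster R x

/-- A σ-model is descriptive if it satisfies (dif), (ref) and (com). -/
def Descriptive {W : Type} (σ : Finset ℕ) (M : KModel W) : Prop :=
  (∀ x y : W, (∀ φ : MF, φ.sig ⊆ σ → (Sat M x φ ↔ Sat M y φ)) → x = y) ∧
  (∀ x y : W, M.R x y ↔ ∀ χ : MF, χ.sig ⊆ σ → Sat M y χ → Sat M x (MF.dia χ)) ∧
  (∀ Γ : Set MF, (∀ φ ∈ Γ, φ.sig ⊆ σ) →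
    (∀ Γ' : Finset MF, ↑Γ' ⊆ Γ → ∃ x : W, ∀ φ ∈ Γ', Sat M x φ) →
    ∃ x : W, ∀ φ ∈ Γ, Sat M x φ)

/-- The ρ-type of a point: the set of all ρ-formulas true at it. -/
def rType {W : Type} (M : KModel W) (ρ : Finset ℕ) (x : W) : Set MF :=
  {φ : MF | φ.sig ⊆ ρ ∧ Sat M x φ}

/-- A cluster C is ρ-maximal if whenever C R y and some x ∈ C has the same
ρ-type as y, then y ∈ C. -/
def RhoMaximal {W : Type} (M : KModel W) (ρ : Finset ℕ) (C : Set W) : Prop :=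
  ∀ x ∈ C, ∀ y : W, clusterRelPt M.R C y → rType M ρ x = rType M ρ y → y ∈ C

/-- β is a ρ-bisimulation between M1 and M2: conditions (atom) and (move). -/
def IsBisim {W1 W2 : Type} (ρ : Finset ℕ) (M1 : KModel W1) (M2 : KModel W2)
    (β : W1 → W2 → Prop) : Prop :=
  ∀ x1 x2, β x1 x2 →
    (∀ n ∈ ρ, M1.val n x1 ↔ M2.val n x2) ∧
    (∀ y1, M1.R x1 y1 → ∃ y2, M2.R x2 y2 ∧ β y1 y2) ∧
    (∀ y2, M2.R x2 y2 → ∃ y1, M1.R x1 y1 ∧ β y1 y2)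

/-- M1,x1 ∼ρ M2,x2 : some ρ-bisimulation relates x1 to x2. -/
def Bisimilar {W1 W2 : Type} (ρ : Finset ℕ) (M1 : KModel W1) (x1 : W1)
    (M2 : KModel W2) (x2 : W2) : Prop :=
  ∃ β : W1 → W2 → Prop, IsBisim ρ M1 M2 β ∧ β x1 x2

/-!
Descriptive models are modally saturated: if every finite part of a set Γ of σ-formulas is
satisfiable at some successor of x, then by (com) the set Γ together with all ¬χ for which ◇χ
fails at x is satisfiable, and by (ref) a point satisfying it is a successor of x satisfying Γ.
Applied to the ρ-type of a successor y1 of x1 (whose finite parts are witnessed through ◇ of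
their conjunction, a ρ-formula true at x1 and hence at x2), this shows that equality of ρ-types
is a ρ-bisimulation between two descriptive models. Conversely, ρ-formulas are invariant
under ρ-bisimulations.
-/

namespace MF

def conj (l : List MF) : MF := l.foldr MF.and MF.top

theorem sig_conj_subset {ρ : Finset ℕ} {l : List MF} (h : ∀ φ ∈ l, φ.sig ⊆ ρ) :
    (conj l).sig ⊆ ρ := by
  induction l with
  | nil => simp [conj, sig]
  | cons a l ih =>
    simp only [List.mem_cons, forall_eq_or_imp] at h
    exact Finset.union_subset h.1 (ih h.2)

end MF

section

variable {W W1 W2 : Type} {σ ρ : Finset ℕ}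

theorem sat_conj (M : KModel W) (x : W) (l : List MF) :
    Sat M x (MF.conj l) ↔ ∀ φ ∈ l, Sat M x φ := by
  induction l with
  | nil => simp [MF.conj, Sat]
  | cons a l ih => simp [MF.conj, Sat, ← ih]

theorem IsBisim.sat_iff {M1 : KModel W1} {M2 : KModel W2} {β : W1 → W2 → Prop}
    (hβ : IsBisim ρ M1 M2 β) {φ : MF} (hφ : φ.sig ⊆ ρ) {x1 : W1} {x2 : W2} (h : β x1 x2) :
    Sat M1 x1 φ ↔ Sat M2 x2 φ := by
  induction φ generalizing x1 x2 with
  | var n => exact (hβ x1 x2 h).1 n (hφ (Finset.mem_singleton_self n))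
  | top | bot => rfl
  | neg a ih => exact not_congr (ih hφ h)
  | and a b iha ihb =>
    rw [MF.sig, Finset.union_subset_iff] at hφ
    exact and_congr (iha hφ.1 h) (ihb hφ.2 h)
  | dia a ih =>
    constructor
    · rintro ⟨y1, hxy, hy⟩
      obtain ⟨y2, hxy2, hβy⟩ := (hβ x1 x2 h).2.1 y1 hxy
      exact ⟨y2, hxy2, (ih hφ hβy).mp hy⟩
    · rintro ⟨y2, hxy, hy⟩
      obtain ⟨y1, hxy1, hβy⟩ := (hβ x1 x2 h).2.2 y2 hxy
      exact ⟨y1, hxy1, (ih hφ hβy).mpr hy⟩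

theorem Bisimilar.rType_eq {M1 : KModel W1} {M2 : KModel W2} {x1 : W1} {x2 : W2}
    (h : Bisimilar ρ M1 x1 M2 x2) : rType M1 ρ x1 = rType M2 ρ x2 := by
  obtain ⟨β, hβ, hx⟩ := h
  ext φ
  exact and_congr_right fun hφ => hβ.sat_iff hφ hx

/-- Types are complete: a ρ-formula missing from a type has its negation in it. -/
theorem rType_eq_of_forall_sat {M1 : KModel W1} {M2 : KModel W2} {x1 : W1} {x2 : W2}
    (h : ∀ φ ∈ rType M1 ρ x1, Sat M2 x2 φ) : rType M1 ρ x1 = rType M2 ρ x2 := by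
  ext φ
  refine ⟨fun hφ => ⟨hφ.1, h φ hφ⟩, fun ⟨hφ, hsat⟩ => ⟨hφ, ?_⟩⟩
  by_contra hn
  exact h (.neg φ) ⟨hφ, hn⟩ hsat

theorem Descriptive.exists_rel_forall_sat {M : KModel W} (hd : Descriptive σ M) {x : W}
    {Γ : Set MF} (hΓ : ∀ φ ∈ Γ, φ.sig ⊆ σ)
    (hfin : ∀ Γ' : Finset MF, ↑Γ' ⊆ Γ → ∃ y, M.R x y ∧ ∀ φ ∈ Γ', Sat M y φ) :
    ∃ y, M.R x y ∧ ∀ φ ∈ Γ, Sat M y φ := by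
  classical
  obtain ⟨-, href, hcom⟩ := hd
  set Δ : Set MF := MF.neg '' {χ | χ.sig ⊆ σ ∧ ¬ Sat M x (.dia χ)}
  have hΓΔ : ∀ φ ∈ Γ ∪ Δ, φ.sig ⊆ σ := by
    rintro φ (hφ | ⟨χ, ⟨hχ, -⟩, rfl⟩)
    exacts [hΓ φ hφ, hχ]
  have hfinΓΔ : ∀ Γ' : Finset MF, ↑Γ' ⊆ Γ ∪ Δ → ∃ y, ∀ φ ∈ Γ', Sat M y φ := by
    intro Γ' hΓ'
    obtain ⟨y, hxy, hy⟩ := hfin (Γ'.filter (· ∈ Γ)) (by simp [Set.subset_def])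
    refine ⟨y, fun φ hφ => ?_⟩
    by_cases hφΓ : φ ∈ Γ
    · exact hy φ (Finset.mem_filter.mpr ⟨hφ, hφΓ⟩)
    · obtain ⟨χ, ⟨-, hnχ⟩, rfl⟩ := (hΓ' hφ).resolve_left hφΓ
      exact fun hχ => hnχ ⟨y, hxy, hχ⟩
  obtain ⟨y, hy⟩ := hcom _ hΓΔ hfinΓΔ
  refine ⟨y, (href x y).mpr fun χ hχ hyχ => ?_, fun φ hφ => hy φ (.inl hφ)⟩
  by_contra hnχ
  exact hy (.neg χ) (.inr ⟨χ, ⟨hχ, hnχ⟩, rfl⟩) hyχ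

theorem Descriptive.exists_rel_rType_eq {M1 : KModel W1} {M2 : KModel W2}
    (hd : Descriptive σ M2) (hρσ : ρ ⊆ σ) {x1 y1 : W1} {x2 : W2}
    (h : rType M1 ρ x1 = rType M2 ρ x2) (hxy : M1.R x1 y1) :
    ∃ y2, M2.R x2 y2 ∧ rType M1 ρ y1 = rType M2 ρ y2 := by
  have hfin : ∀ Γ' : Finset MF, ↑Γ' ⊆ rType M1 ρ y1 →
      ∃ y2, M2.R x2 y2 ∧ ∀ φ ∈ Γ', Sat M2 y2 φ := by
    intro Γ' hΓ'
    have hdia : MF.dia (MF.conj Γ'.toList) ∈ rType M1 ρ x1 := by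
      refine ⟨MF.sig_conj_subset fun φ hφ => (hΓ' (Finset.mem_toList.mp hφ)).1, y1, hxy, ?_⟩
      exact (sat_conj M1 y1 _).mpr fun φ hφ => (hΓ' (Finset.mem_toList.mp hφ)).2
    obtain ⟨y2, hxy2, hy2⟩ := (h ▸ hdia).2
    exact ⟨y2, hxy2, fun φ hφ => (sat_conj M2 y2 _).mp hy2 φ (Finset.mem_toList.mpr hφ)⟩
  obtain ⟨y2, hxy2, hy2⟩ :=
    hd.exists_rel_forall_sat (fun φ hφ => hφ.1.trans hρσ) hfin
  exact ⟨y2, hxy2, rType_eq_of_forall_sat hy2⟩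

theorem isBisim_rType_eq {M1 : KModel W1} {M2 : KModel W2} (hρσ : ρ ⊆ σ)
    (hd1 : Descriptive σ M1) (hd2 : Descriptive σ M2) :
    IsBisim ρ M1 M2 fun x1 x2 => rType M1 ρ x1 = rType M2 ρ x2 := by
  intro x1 x2 h
  refine ⟨fun n hn => ?_, fun y1 hxy => hd2.exists_rel_rType_eq hρσ h hxy, fun y2 hxy => ?_⟩
  · have hvar : MF.var n ∈ rType M1 ρ x1 ↔ MF.var n ∈ rType M2 ρ x2 := by rw [h]
    simpa [rType, MF.sig, Sat, hn] using hvar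
  · obtain ⟨y1, hxy1, hy⟩ := hd1.exists_rel_rType_eq hρσ h.symm hxy
    exact ⟨y1, hxy1, hy.symm⟩

end

theorem stmt13_general {W1 W2 : Type} (σ ρ : Finset ℕ) (hρσ : ρ ⊆ σ)
    (M1 : KModel W1) (M2 : KModel W2)
    (hd1 : Descriptive σ M1) (hd2 : Descriptive σ M2)
    (x1 : W1) (x2 : W2) :
    rType M1 ρ x1 = rType M2 ρ x2 ↔ Bisimilar ρ M1 x1 M2 x2 :=
  ⟨fun h => ⟨_, isBisim_rType_eq hρσ hd1 hd2, h⟩, Bisimilar.rType_eq⟩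

/-- For descriptive σ-models on weakly transitive frames and ρ ⊆ σ, equality
of ρ-types coincides with ρ-bisimilarity. -/
theorem stmt13 {W1 W2 : Type} (σ ρ : Finset ℕ) (hρσ : ρ ⊆ σ)
    (M1 : KModel W1) (M2 : KModel W2)
    (hw1 : WTrans M1.R) (hw2 : WTrans M2.R)
    (hd1 : Descriptive σ M1) (hd2 : Descriptive σ M2)
    (x1 : W1) (x2 : W2) :
    rType M1 ρ x1 = rType M2 ρ x2 ↔ Bisimilar ρ M1 x1 M2 x2 :=
  stmt13_general σ ρ hρσ M1 M2 hd1 hd2 x1 x2
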